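/- The number of spanning trees in the cone over a finite graph G equals |χ_G(−1)|, where χ_G is the characteristic polynomial of the Laplacian matrix of G. -/

import Mathlib

open SimpleGraph

/-- The cone over a graph `G`: the join of `G` with a single new vertex (`none`),
joined by an edge to every vertex of `G`. -/
def cone {V : Type*} (G : SimpleGraph V) : SimpleGraph (Option V) :=
  SimpleGraph.fromRel (fun x y => x = none ∨ ∃ a b, x = some a ∧ y = some b ∧ G.Adj a b)

/-- The number of spanning trees of `G`. -/
noncomputable def numSpanningTrees {V : Type*} (G : SimpleGraph V) : ℕ :=
  Nat.card {H : SimpleGraph V // H ≤ G ∧ H.IsTree}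

open scoped Classical in
/-- The Laplacian matrix of `G` with integer entries. -/
noncomputable def lap {V : Type*} [Fintype V] (G : SimpleGraph V) : Matrix V V ℤ :=
  G.lapMatrix ℤ

/-!
`χ_G(-1) = (-1)^n det (1 + L(G))`, and `1 + L(G)` is the Laplacian of the cone with the apex row
and column deleted. A spanning tree of the cone is the same thing as a parent map
`g : V → Option V` (`none` standing for the apex) that follows edges of `G` and reaches the apex
from every vertex: the tree is the graph of the map, and conversely every vertex takes as parent its
neighbour closer to the apex. The depth of a vertex under `g` is its distance to the apex in the
tree, which makes the correspondence injective.

Row `i` of `1 + L(G)` is the sum, over the possible parents `o` of `i`, of `e_i - e_o` (with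
`e_none = 0`), so multilinearity writes `det (1 + L(G))` as the sum over all parent maps `g` of
`det (1 - P_g)`, where `P_g` is the matrix of `g`. That determinant is `1` when `g` reaches the
root, since `P_g` is then triangular with respect to the depth, and `0` otherwise, since the
indicator of the vertices that never reach the root lies in the kernel of `1 - P_g`.
-/

theorem Function.exists_iterate_eq_of_lt {α : Type*} {f : α → α} {r : α} (μ : α → ℕ)
    (hμ : ∀ x, x ≠ r → μ (f x) < μ x) (x : α) : ∃ k, f^[k] x = r := by
  induction hx : μ x using Nat.strong_induction_on generalizing x with
  | _ n ih =>
    by_cases hxr : x = r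
    · exact ⟨0, hxr⟩
    · obtain ⟨k, hk⟩ := ih _ (hx ▸ hμ x hxr) (f x) rfl
      exact ⟨k + 1, hk⟩

namespace SimpleGraph

variable {α : Type*} {H : SimpleGraph α}

theorem Connected.exists_adj_dist_lt (hH : H.Connected) {x r : α} (hxr : x ≠ r) :
    ∃ y, H.Adj x y ∧ H.dist y r < H.dist x r := by
  obtain ⟨p, hp⟩ := hH.exists_walk_length_eq_dist x r
  cases p with
  | nil => exact absurd rfl hxr
  | cons hadj q =>
    refine ⟨_, hadj, ?_⟩
    have := dist_le q
    rw [Walk.length_cons] at hp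
    omega

theorem exists_walk_length_le_of_iterate_eq {f : α → α} (hf : ∀ x, x ≠ f x → H.Adj x (f x))
    {r : α} : ∀ {k : ℕ} {x : α}, f^[k] x = r → ∃ p : H.Walk x r, p.length ≤ k
  | 0, _, rfl => ⟨Walk.nil, le_rfl⟩
  | k + 1, x, hk => by
    obtain ⟨q, hq⟩ := exists_walk_length_le_of_iterate_eq hf (k := k) hk
    by_cases hx : x = f x
    · exact ⟨q.copy hx.symm rfl, by rw [Walk.length_copy]; omega⟩
    · exact ⟨.cons (hf x hx) q, by rw [Walk.length_cons]; omega⟩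

end SimpleGraph

section ParentMap

variable {V : Type*} {g g' : V → Option V}

/-- `g v = none` means that the parent of `v` is the root. -/
def parentStep (g : V → Option V) (x : Option V) : Option V := x.bind g

def ReachesRoot (g : V → Option V) : Prop := ∀ x, ∃ k, (parentStep g)^[k] x = none

namespace ReachesRoot

noncomputable def depth (hg : ReachesRoot g) (x : Option V) : ℕ := Nat.find (hg x)

theorem depth_none (hg : ReachesRoot g) : hg.depth none = 0 :=
  Nat.find_eq_zero _ |>.mpr rfl

theorem depth_some (hg : ReachesRoot g) (v : V) : hg.depth (some v) = hg.depth (g v) + 1 :=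
  Nat.find_comp_succ _ (hg (g v)) (Option.some_ne_none v)

theorem apply_ne_some_self (hg : ReachesRoot g) (v : V) : g v ≠ some v := by
  intro h
  have := hg.depth_some v
  rw [h] at this
  omega

end ReachesRoot

def parentGraph (g : V → Option V) : SimpleGraph (Option V) :=
  fromRel fun x y => ∃ v, x = some v ∧ g v = y

theorem parentGraph_adj {x y : Option V} : (parentGraph g).Adj x y ↔
    x ≠ y ∧ ((∃ v, x = some v ∧ g v = y) ∨ ∃ v, y = some v ∧ g v = x) :=
  fromRel_adj _ _ _

theorem parentGraph_adj_parentStep {x : Option V} (hx : x ≠ parentStep g x) :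
    (parentGraph g).Adj x (parentStep g x) := by
  cases x with
  | none => exact absurd rfl hx
  | some v => exact parentGraph_adj.mpr ⟨hx, .inl ⟨v, rfl, rfl⟩⟩

namespace ReachesRoot

theorem depth_le_depth_add_one_of_adj (hg : ReachesRoot g) {x y : Option V}
    (h : (parentGraph g).Adj x y) : hg.depth x ≤ hg.depth y + 1 := by
  obtain ⟨-, ⟨v, rfl, rfl⟩ | ⟨v, rfl, rfl⟩⟩ := parentGraph_adj.mp h
  · exact (hg.depth_some v).le
  · rw [hg.depth_some]
    omega

theorem depth_le_length (hg : ReachesRoot g) {x y : Option V} (p : (parentGraph g).Walk x y) :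
    hg.depth x ≤ p.length + hg.depth y := by
  induction p with
  | nil => simp
  | cons h _ ih =>
    have := hg.depth_le_depth_add_one_of_adj h
    rw [Walk.length_cons]
    omega

theorem exists_walk_length_le_depth (hg : ReachesRoot g) (x : Option V) :
    ∃ p : (parentGraph g).Walk x none, p.length ≤ hg.depth x :=
  exists_walk_length_le_of_iterate_eq (fun _ => parentGraph_adj_parentStep) (Nat.find_spec (hg x))

theorem depth_le_of_parentGraph_le (hg : ReachesRoot g) (hg' : ReachesRoot g')
    (h : parentGraph g' ≤ parentGraph g) (x : Option V) : hg.depth x ≤ hg'.depth x := by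
  obtain ⟨p, hp⟩ := hg'.exists_walk_length_le_depth x
  have := hg.depth_le_length (p.mapLe h)
  rw [Walk.length_mapLe, hg.depth_none] at this
  omega

theorem parentGraph_connected (hg : ReachesRoot g) : (parentGraph g).Connected :=
  connected_iff_exists_forall_reachable _ |>.mpr
    ⟨none, fun x => (hg.exists_walk_length_le_depth x).elim fun p _ => p.reachable.symm⟩

theorem edgeSet_parentGraph (hg : ReachesRoot g) :
    (parentGraph g).edgeSet = Set.range fun v => s(some v, g v) := by
  ext e
  induction e using Sym2.ind with
  | _ x y =>
    rw [mem_edgeSet, parentGraph_adj, Set.mem_range]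
    constructor
    · rintro ⟨-, ⟨v, rfl, rfl⟩ | ⟨v, rfl, rfl⟩⟩
      · exact ⟨v, rfl⟩
      · exact ⟨v, Sym2.eq_swap⟩
    · rintro ⟨v, hv⟩
      rcases Sym2.eq_iff.mp hv with ⟨rfl, rfl⟩ | ⟨rfl, rfl⟩
      · exact ⟨(hg.apply_ne_some_self v).symm, .inl ⟨v, rfl, rfl⟩⟩
      · exact ⟨hg.apply_ne_some_self v, .inr ⟨v, rfl, rfl⟩⟩

theorem isTree_parentGraph [Finite V] (hg : ReachesRoot g) : (parentGraph g).IsTree := by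
  have hinj : Function.Injective fun v => s(some v, g v) := by
    intro v w hvw
    rcases Sym2.eq_iff.mp hvw with ⟨h, -⟩ | ⟨hv, hw⟩
    · exact Option.some_injective _ h
    · have h₁ := hg.depth_some v
      have h₂ := hg.depth_some w
      rw [hw] at h₁
      rw [← hv] at h₂
      omega
  rw [isTree_iff_connected_and_card, hg.edgeSet_parentGraph, Nat.card_range_of_injective hinj,
    Finite.card_option]
  exact ⟨hg.parentGraph_connected, rfl⟩

end ReachesRoot

theorem parentGraph_injOn : Set.InjOn (parentGraph (V := V)) {g | ReachesRoot g} := by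
  intro g hg g' hg' h
  -- depths are the distances to the root, so they only depend on the graph
  have hdepth x : hg.depth x = hg'.depth x :=
    (hg.depth_le_of_parentGraph_le hg' h.ge x).antisymm (hg'.depth_le_of_parentGraph_le hg h.le x)
  funext v
  have hadj : (parentGraph g).Adj (some v) (g' v) :=
    h ▸ parentGraph_adj_parentStep (hg'.apply_ne_some_self v).symm
  obtain ⟨-, ⟨w, hw, hwv⟩ | ⟨w, hw, hwv⟩⟩ := parentGraph_adj.mp hadj
  · obtain rfl := Option.some_injective _ hw
    exact hwv
  · have h₁ := hg.depth_some w
    have h₂ := hg'.depth_some v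
    rw [hwv, hdepth] at h₁
    rw [hw, ← hdepth] at h₂
    omega

end ParentMap

section Cone

variable {V : Type*} {G : SimpleGraph V}

theorem cone_adj_some_some {a b : V} : (cone G).Adj (some a) (some b) ↔ G.Adj a b := by
  simpa [cone, fromRel_adj, G.adj_comm b a] using G.ne_of_adj

theorem cone_adj_none_some (v : V) : (cone G).Adj none (some v) := by
  simp [cone, fromRel_adj]

theorem parentGraph_le_cone {g : V → Option V} (hg : ∀ v u, g v = some u → G.Adj v u) :
    parentGraph g ≤ cone G := by
  have key v : g v ≠ some v → (cone G).Adj (some v) (g v) := by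
    cases hv : g v with
    | none => exact fun _ => (cone_adj_none_some v).symm
    | some u => exact fun _ => cone_adj_some_some.mpr (hg v u hv)
  intro x y h
  obtain ⟨hxy, ⟨v, rfl, rfl⟩ | ⟨v, rfl, rfl⟩⟩ := parentGraph_adj.mp h
  · exact key v hxy.symm
  · exact (key v hxy).symm

theorem exists_parentGraph_eq_of_isTree [Finite V] {T : SimpleGraph (Option V)} (hT : T.IsTree)
    (hle : T ≤ cone G) :
    ∃ g : V → Option V, (∀ v u, g v = some u → G.Adj v u) ∧ ReachesRoot g ∧ parentGraph g = T := by
  choose g hadj hdist using fun v => hT.connected.exists_adj_dist_lt (Option.some_ne_none v)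
  have hg : ReachesRoot g := Function.exists_iterate_eq_of_lt (T.dist · none) fun x hx => by
    obtain ⟨v, rfl⟩ := Option.ne_none_iff_exists'.mp hx
    exact hdist v
  have hparent : parentGraph g ≤ T := by
    intro x y h
    obtain ⟨-, ⟨v, rfl, rfl⟩ | ⟨v, rfl, rfl⟩⟩ := parentGraph_adj.mp h
    · exact hadj v
    · exact (hadj v).symm
  refine ⟨g, fun v u hv => cone_adj_some_some.mp (hle (hv ▸ hadj v)), hg, ?_⟩
  exact hparent.antisymm <|
    (maximal_isAcyclic_iff_isTree.mpr hg.isTree_parentGraph).le_of_ge hT.isAcyclic hparent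

end Cone

section Counting

open Finset Matrix

variable {V : Type*} [DecidableEq V]

def parentMatrix (g : V → Option V) : Matrix V V ℤ :=
  of fun i j => if g i = some j then 1 else 0

variable [Fintype V]

def parentChoices (G : SimpleGraph V) [DecidableRel G.Adj] (v : V) : Finset (Option V) :=
  insert none ((G.neighborFinset v).map .some)

theorem mem_parentChoices {G : SimpleGraph V} [DecidableRel G.Adj] {v : V} {o : Option V} :
    o ∈ parentChoices G v ↔ ∀ u, o = some u → G.Adj v u := by
  cases o <;> simp [parentChoices]

open Classical in
theorem card_spanningTrees_cone (G : SimpleGraph V) [DecidableRel G.Adj] :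
    Nat.card {T // T ≤ cone G ∧ T.IsTree} =
      #{g ∈ Fintype.piFinset (parentChoices G) | ReachesRoot g} := by
  have hmem g : g ∈ {g ∈ Fintype.piFinset (parentChoices G) | ReachesRoot g} ↔
      (∀ v u, g v = some u → G.Adj v u) ∧ ReachesRoot g := by
    simp [mem_parentChoices]
  let toTree (g : {g // g ∈ {g ∈ Fintype.piFinset (parentChoices G) | ReachesRoot g}}) :
      {T // T ≤ cone G ∧ T.IsTree} :=
    ⟨parentGraph g.1, parentGraph_le_cone ((hmem _).mp g.2).1,
      ((hmem _).mp g.2).2.isTree_parentGraph⟩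
  have hbij : Function.Bijective toTree := by
    refine ⟨fun g g' h => ?_, fun ⟨T, hle, hT⟩ => ?_⟩
    · exact Subtype.ext <| parentGraph_injOn ((hmem _).mp g.2).2 ((hmem _).mp g'.2).2
        (congrArg Subtype.val h)
    · obtain ⟨g, hadj, hg, rfl⟩ := exists_parentGraph_eq_of_isTree hT hle
      exact ⟨⟨g, (hmem g).mpr ⟨hadj, hg⟩⟩, rfl⟩
  rw [← Nat.card_eq_finsetCard]
  exact (Nat.card_congr (Equiv.ofBijective toTree hbij)).symm

theorem parentMatrix_mulVec (g : V → Option V) (x : V → ℤ) (i : V) :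
    (parentMatrix g *ᵥ x) i = (g i).elim 0 x := by
  cases h : g i <;> simp [parentMatrix, mulVec, dotProduct, h]

theorem det_one_sub_parentMatrix_of_reachesRoot {g : V → Option V} (hg : ReachesRoot g) :
    (1 - parentMatrix g).det = 1 := by
  have hne {i j : V} (h : hg.depth (some i) ≤ hg.depth (some j)) : g i ≠ some j := by
    intro hij
    have := hg.depth_some i
    rw [hij] at this
    omega
  have htri : (1 - parentMatrix g).BlockTriangular fun i => OrderDual.toDual (hg.depth (some i)) :=
    fun i j hij => by
      have hij : hg.depth (some i) < hg.depth (some j) := hij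
      have hij' : i ≠ j := by rintro rfl; omega
      simp [parentMatrix, one_apply, hne hij.le, hij']
  rw [htri.det]
  refine prod_eq_one fun k _ => ?_
  suffices (1 - parentMatrix g).toSquareBlock _ k = 1 by rw [this, det_one]
  ext ⟨i, hi⟩ ⟨j, hj⟩
  have hij : hg.depth (some i) = hg.depth (some j) := OrderDual.toDual_inj.mp (hi.trans hj.symm)
  simp [toSquareBlock_def, parentMatrix, one_apply, hne hij.le]

theorem det_one_sub_parentMatrix_of_not_reachesRoot {g : V → Option V} (hg : ¬ReachesRoot g) :
    (1 - parentMatrix g).det = 0 := by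
  classical
  let y : Option V → ℤ := fun x => if ∃ k, (parentStep g)^[k] x = none then 0 else 1
  have hy_none : y none = 0 := if_pos ⟨0, rfl⟩
  have hy_step v : y (g v) = y (some v) := by
    refine if_congr ⟨fun ⟨k, hk⟩ => ⟨k + 1, hk⟩, ?_⟩ rfl rfl
    rintro ⟨_ | k, hk⟩
    · exact absurd hk (Option.some_ne_none v)
    · exact ⟨k, hk⟩
  refine (exists_mulVec_eq_zero_iff (M := 1 - parentMatrix g)).mp
    ⟨y ∘ some, fun h => hg fun x => ?_, ?_⟩
  · by_contra hx
    cases x with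
    | none => exact hx ⟨0, rfl⟩
    | some v => simpa [y, hx] using congrFun h v
  · ext i
    have hy_elim (o : Option V) : o.elim 0 (y ∘ some) = y o := by
      cases o
      exacts [hy_none.symm, rfl]
    rw [sub_mulVec, one_mulVec, Pi.sub_apply, parentMatrix_mulVec, hy_elim, hy_step, Pi.zero_apply]
    exact sub_self _

theorem det_one_add_lapMatrix (G : SimpleGraph V) [DecidableRel G.Adj] :
    (1 + G.lapMatrix ℤ).det =
      ∑ g ∈ Fintype.piFinset (parentChoices G), (1 - parentMatrix g).det := by
  let row (i : V) (o : Option V) : V → ℤ := Pi.single i 1 - fun j => if o = some j then 1 else 0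
  have hrows : 1 + G.lapMatrix ℤ = of fun i => ∑ o ∈ parentChoices G i, row i o := by
    ext i j
    obtain rfl | hij := eq_or_ne i j
    · simp [row, parentChoices, Finset.sum_apply, lapMatrix, degMatrix, add_comm]
    · simp [row, parentChoices, Finset.sum_apply, lapMatrix, degMatrix, hij, hij.symm]
  have hparent g : of (fun i => row i (g i)) = 1 - parentMatrix g := by
    ext i j
    simp [row, parentMatrix, one_apply, Pi.single_apply, eq_comm]
  calc (1 + G.lapMatrix ℤ).det
      = detRowAlternating fun i => ∑ o ∈ parentChoices G i, row i o := by rw [hrows]; rfl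
    _ = ∑ g ∈ Fintype.piFinset (parentChoices G), detRowAlternating fun i => row i (g i) :=
      detRowAlternating.toMultilinearMap.map_sum_finset row _
    _ = _ := sum_congr rfl fun g _ => by rw [← hparent]; rfl

open Classical in
theorem det_one_add_lapMatrix_eq_card (G : SimpleGraph V) [DecidableRel G.Adj] :
    (1 + G.lapMatrix ℤ).det = #{g ∈ Fintype.piFinset (parentChoices G) | ReachesRoot g} := by
  rw [det_one_add_lapMatrix, card_filter, Nat.cast_sum]
  refine sum_congr rfl fun g _ => ?_
  by_cases hg : ReachesRoot g
  · simp [hg, det_one_sub_parentMatrix_of_reachesRoot hg]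
  · simp [hg, det_one_sub_parentMatrix_of_not_reachesRoot hg]

end Counting

theorem Matrix.eval_neg_one_charpoly {n R : Type*} [Fintype n] [DecidableEq n] [CommRing R]
    (M : Matrix n n R) : M.charpoly.eval (-1) = (-1) ^ Fintype.card n * (1 + M).det := by
  rw [eval_charpoly, map_neg, map_one, ← neg_add', det_neg]

theorem numSpanningTrees_cone_eq_abs_charpoly_eval_neg_one
    {V : Type*} [Fintype V] [DecidableEq V] (G : SimpleGraph V) :
    numSpanningTrees (cone G) = ((lap G).charpoly.eval (-1)).natAbs := by
  classical
  have hlap : lap G = G.lapMatrix ℤ := by unfold lap; congr!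
  rw [numSpanningTrees, card_spanningTrees_cone, hlap, Matrix.eval_neg_one_charpoly,
    det_one_add_lapMatrix_eq_card, Int.natAbs_mul, Int.natAbs_pow, Int.natAbs_neg, Int.natAbs_one,
    one_pow, one_mul, Int.natAbs_natCast]
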